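/- arXiv:2403.05305 — 6 statements merged into one kernel-verified Lean document; each statement's English description precedes it below -/
import Mathlib

section
/- Let N ≥ 1 and let q : {0,…,N} → E be a discrete curve. Then the discrete Lagrange–d'Alembert principle holds, i.e. Σ_{k=0}^{N−1} [ D₁L_d(q_k,q_{k+1})(δ_k) + D₂L_d(q_k,q_{k+1})(δ_{k+1}) + f⁻(q_k,q_{k+1})(δ_k) + f⁺(q_k,q_{k+1})(δ_{k+1}) ] = 0 for every infinitesimal variation δ : {0,…,N} → E with δ_0 = 0 and δ_N = 0, if and only if the forced discrete Euler–Lagrange equations D₂L_d(q_{k−1},q_k) + D₁L_d(q_k,q_{k+1}) + f⁺(q_{k−1},q_k) + f⁻(q_k,q_{k+1}) = 0 (as elements of E →L[ℝ] ℝ) hold for all k with 1 ≤ k ≤ N−1. -/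
open ContinuousLinearMap

variable {E : Type*} [NormedAddCommGroup E] [NormedSpace ℝ E] [FiniteDimensional ℝ E]

/-- Partial Fréchet derivative in the first variable. -/
noncomputable def D1 (L : E × E → ℝ) (x : E × E) : E →L[ℝ] ℝ :=
  fderiv ℝ (fun a => L (a, x.2)) x.1

/-- Partial Fréchet derivative in the second variable. -/
noncomputable def D2 (L : E × E → ℝ) (x : E × E) : E →L[ℝ] ℝ :=
  fderiv ℝ (fun b => L (x.1, b)) x.2

/-- **Discrete Lagrange–d'Alembert principle ↔ forced discrete Euler–Lagrange equations.**
A discrete curve `q : {0,…,N} → E` satisfies the discrete Lagrange–d'Alembert principle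
(the variational sum vanishes for all variations `δ` with `δ 0 = 0` and `δ N = 0`) if and
only if the forced discrete Euler–Lagrange equations hold for all `1 ≤ k ≤ N - 1`. -/
theorem discrete_lagrange_dalembert_iff_forced_euler_lagrange
    (Ld : E × E → ℝ) (fm fp : E × E → (E →L[ℝ] ℝ))
    (hLd : ContDiff ℝ (⊤ : ℕ∞) Ld) (hfm : ContDiff ℝ (⊤ : ℕ∞) fm) (hfp : ContDiff ℝ (⊤ : ℕ∞) fp)
    (N : ℕ) (hN : 1 ≤ N) (q : ℕ → E) :
    (∀ δ : ℕ → E, δ 0 = 0 → δ N = 0 →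
      ∑ k ∈ Finset.range N,
        (D1 Ld (q k, q (k + 1)) (δ k) + D2 Ld (q k, q (k + 1)) (δ (k + 1))
          + fm (q k, q (k + 1)) (δ k) + fp (q k, q (k + 1)) (δ (k + 1))) = 0)
    ↔ (∀ k : ℕ, 1 ≤ k → k ≤ N - 1 →
        D2 Ld (q (k - 1), q k) + D1 Ld (q k, q (k + 1))
          + fp (q (k - 1), q k) + fm (q k, q (k + 1)) = 0) := by
  set T : ℕ → (E →L[ℝ] ℝ) := fun k =>
    D2 Ld (q (k - 1), q k) + D1 Ld (q k, q (k + 1))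
      + fp (q (k - 1), q k) + fm (q k, q (k + 1)) with hT
  -- key rearrangement
  have key : ∀ δ : ℕ → E, δ 0 = 0 → δ N = 0 →
      ∑ k ∈ Finset.range N,
        (D1 Ld (q k, q (k + 1)) (δ k) + D2 Ld (q k, q (k + 1)) (δ (k + 1))
          + fm (q k, q (k + 1)) (δ k) + fp (q k, q (k + 1)) (δ (k + 1)))
      = ∑ k ∈ Finset.Ico 1 N, T k (δ k) := by
    intro δ h0 hNδ
    have hsplit : ∑ k ∈ Finset.range N,
        (D1 Ld (q k, q (k + 1)) (δ k) + D2 Ld (q k, q (k + 1)) (δ (k + 1))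
          + fm (q k, q (k + 1)) (δ k) + fp (q k, q (k + 1)) (δ (k + 1)))
      = (∑ k ∈ Finset.range N, (D1 Ld (q k, q (k + 1)) (δ k) + fm (q k, q (k + 1)) (δ k)))
        + ∑ k ∈ Finset.range N,
            (D2 Ld (q k, q (k + 1)) (δ (k + 1)) + fp (q k, q (k + 1)) (δ (k + 1))) := by
      rw [← Finset.sum_add_distrib]
      exact Finset.sum_congr rfl fun k _ => by ring
    have hA : ∑ k ∈ Finset.range N, (D1 Ld (q k, q (k + 1)) (δ k) + fm (q k, q (k + 1)) (δ k))
        = ∑ k ∈ Finset.Ico 1 N, (D1 Ld (q k, q (k + 1)) (δ k) + fm (q k, q (k + 1)) (δ k)) := by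
      rw [Finset.range_eq_Ico]
      refine (Finset.sum_subset (Finset.Ico_subset_Ico (Nat.zero_le 1) le_rfl) ?_).symm
      intro x hx hx'
      have : x = 0 := by
        simp only [Finset.mem_Ico] at hx hx'
        omega
      simp [this, h0]
    have hB : ∑ k ∈ Finset.range N,
          (D2 Ld (q k, q (k + 1)) (δ (k + 1)) + fp (q k, q (k + 1)) (δ (k + 1)))
        = ∑ k ∈ Finset.Ico 1 N,
          (D2 Ld (q (k - 1), q k) (δ k) + fp (q (k - 1), q k) (δ k)) := by
      have h1 : ∑ k ∈ Finset.Ico 1 (N + 1),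
            (D2 Ld (q (k - 1), q k) (δ k) + fp (q (k - 1), q k) (δ k))
          = ∑ k ∈ Finset.range N,
            (D2 Ld (q k, q (k + 1)) (δ (k + 1)) + fp (q k, q (k + 1)) (δ (k + 1))) := by
        rw [Finset.sum_Ico_eq_sum_range]
        simp [Nat.add_comm 1]
      rw [← h1, Finset.sum_Ico_succ_top hN]
      simp [hNδ]
    rw [hsplit, hA, hB, ← Finset.sum_add_distrib]
    exact Finset.sum_congr rfl fun k _ => by simp [hT]; ring
  constructor
  · intro h k hk1 hk2
    have hkN : k < N := by omega
    ext v
    have h0 : (fun j : ℕ => if j = k then v else 0) 0 = 0 := by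
      simp; omega
    have hNv : (fun j : ℕ => if j = k then v else 0) N = 0 := by
      simp; omega
    have := h (fun j => if j = k then v else 0) h0 hNv
    rw [key _ h0 hNv] at this
    have hsum : ∑ j ∈ Finset.Ico 1 N, T j (if j = k then v else 0) = T k v := by
      rw [Finset.sum_eq_single k]
      · simp
      · intro b _ hb; simp [hb]
      · intro hk; exact absurd (Finset.mem_Ico.mpr ⟨hk1, hkN⟩) hk
    rw [hsum] at this
    simpa [hT] using this
  · intro h δ h0 hNδ
    rw [key δ h0 hNδ]
    refine Finset.sum_eq_zero fun k hk => ?_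
    rw [Finset.mem_Ico] at hk
    have : T k = 0 := h k hk.1 (by omega)
    simp [this]
end

section
/- Assume the forced discrete mechanical system is regular: both FL⁺ and FL⁻ are local diffeomorphisms, i.e. every point of E × E has an open neighborhood on which the map restricts to a homeomorphism onto an open subset of E × (E →L[ℝ] ℝ) whose inverse is differentiable. Let (q0,q1,q2) be a trajectory, i.e. FL⁺(q0,q1) = FL⁻(q1,q2). Then there exist open sets U, V ⊆ E × E and a bijective differentiable map F : U → V with differentiable inverse such that: (1) (q0,q1) ∈ U, (q1,q2) ∈ V and F(q0,q1) = (q1,q2); (2) FL⁻(F(x)) = FL⁺(x) for all x ∈ U, so that for every (x0,x1) ∈ U the triple (x0,x1,pr₂(F(x0,x1))) satisfies the forced discrete Euler–Lagrange equation D₂L_d(x0,x1) + D₁L_d(x1,x2) + f⁺(x0,x1) + f⁻(x1,x2) = 0; (3) every triple (q0′,q1′,q2′) satisfying the forced discrete Euler–Lagrange equation with (q0′,q1′) ∈ U and (q1′,q2′) ∈ V satisfies (q1′,q2′) = F(q0′,q1′). -/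
open ContinuousLinearMap

variable {E : Type*} [NormedAddCommGroup E] [NormedSpace ℝ E] [FiniteDimensional ℝ E]

/-- The forced discrete Legendre transform `FL⁺`. -/
noncomputable def FLp (Ld : E × E → ℝ) (fp : E × E → (E →L[ℝ] ℝ)) (x : E × E) :
    E × (E →L[ℝ] ℝ) := (x.2, D2 Ld x + fp x)

/-- The forced discrete Legendre transform `FL⁻`. -/
noncomputable def FLm (Ld : E × E → ℝ) (fm : E × E → (E →L[ℝ] ℝ)) (x : E × E) :
    E × (E →L[ℝ] ℝ) := (x.1, -D1 Ld x - fm x)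

/-- `Φ` is a local diffeomorphism: every point has an open neighborhood on which `Φ`
restricts to a homeomorphism onto an open set, with differentiable inverse. -/
def IsLocalDiffeo (Φ : (E × E) → (E × (E →L[ℝ] ℝ))) : Prop :=
  ∀ p : E × E, ∃ (U : Set (E × E)) (g : (E × (E →L[ℝ] ℝ)) → E × E),
    p ∈ U ∧ IsOpen U ∧ IsOpen (Φ '' U) ∧ ContinuousOn Φ U ∧
    (∀ x ∈ U, g (Φ x) = x) ∧ (∀ y ∈ Φ '' U, Φ (g y) = y) ∧
    DifferentiableOn ℝ g (Φ '' U)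

/-- The forced discrete Euler–Lagrange equation for a triple `(x0, x1, x2)`. -/
def ForcedDEL (Ld : E × E → ℝ) (fm fp : E × E → (E →L[ℝ] ℝ)) (x0 x1 x2 : E) : Prop :=
  D2 Ld (x0, x1) + D1 Ld (x1, x2) + fp (x0, x1) + fm (x1, x2) = 0

lemma D1_eq (L : E × E → ℝ) (hL : ContDiff ℝ (⊤ : ℕ∞) L) (x : E × E) :
    D1 L x = (fderiv ℝ L x).comp (inl ℝ E E) :=
  (((hL.differentiable (by simp) x).hasFDerivAt.comp x.1
    (hasFDerivAt_prodMk_left x.1 x.2))).fderiv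

lemma D2_eq (L : E × E → ℝ) (hL : ContDiff ℝ (⊤ : ℕ∞) L) (x : E × E) :
    D2 L x = (fderiv ℝ L x).comp (inr ℝ E E) :=
  (((hL.differentiable (by simp) x).hasFDerivAt.comp x.2
    (hasFDerivAt_prodMk_right x.1 x.2))).fderiv

lemma diff_D1 (L : E × E → ℝ) (hL : ContDiff ℝ (⊤ : ℕ∞) L) :
    Differentiable ℝ (D1 L) := by
  rw [show D1 L = fun x => (fderiv ℝ L x).comp (inl ℝ E E) from funext (D1_eq L hL)]
  exact (((compL ℝ E (E × E) ℝ).flip (inl ℝ E E)).differentiable).comp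
    ((hL.fderiv_right (m := 1) (by exact WithTop.coe_le_coe.mpr le_top)).differentiable one_ne_zero)

lemma diff_D2 (L : E × E → ℝ) (hL : ContDiff ℝ (⊤ : ℕ∞) L) :
    Differentiable ℝ (D2 L) := by
  rw [show D2 L = fun x => (fderiv ℝ L x).comp (inr ℝ E E) from funext (D2_eq L hL)]
  exact (((compL ℝ E (E × E) ℝ).flip (inr ℝ E E)).differentiable).comp
    ((hL.fderiv_right (m := 1) (by exact WithTop.coe_le_coe.mpr le_top)).differentiable one_ne_zero)

lemma diff_FLp (Ld : E × E → ℝ) (fp : E × E → (E →L[ℝ] ℝ))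
    (hLd : ContDiff ℝ (⊤ : ℕ∞) Ld) (hfp : ContDiff ℝ (⊤ : ℕ∞) fp) :
    Differentiable ℝ (FLp Ld fp) :=
  (differentiable_snd).prodMk ((diff_D2 Ld hLd).add (hfp.differentiable (by simp)))

lemma diff_FLm (Ld : E × E → ℝ) (fm : E × E → (E →L[ℝ] ℝ))
    (hLd : ContDiff ℝ (⊤ : ℕ∞) Ld) (hfm : ContDiff ℝ (⊤ : ℕ∞) fm) :
    Differentiable ℝ (FLm Ld fm) :=
  (differentiable_fst).prodMk (((diff_D1 Ld hLd).neg).sub (hfm.differentiable (by simp)))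

/-- ForcedDEL is equivalent to matching of Legendre transforms. -/
lemma FDEL_iff (Ld : E × E → ℝ) (fm fp : E × E → (E →L[ℝ] ℝ)) (x0 x1 x2 : E) :
    ForcedDEL Ld fm fp x0 x1 x2 ↔ FLp Ld fp (x0, x1) = FLm Ld fm (x1, x2) := by
  constructor
  · intro h
    refine Prod.ext rfl ?_
    simp only [FLp, FLm]
    have := h
    unfold ForcedDEL at this
    have h2 : D2 Ld (x0, x1) + fp (x0, x1) = -D1 Ld (x1, x2) - fm (x1, x2) := by
      rw [← sub_eq_zero]; rw [← this]; abel
    exact h2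
  · intro h
    have h2 := congrArg Prod.snd h
    simp only [FLp, FLm] at h2
    unfold ForcedDEL
    rw [← sub_eq_zero, show D2 Ld (x0, x1) + D1 Ld (x1, x2) + fp (x0, x1) + fm (x1, x2) - 0 =
      (D2 Ld (x0, x1) + fp (x0, x1)) - (-D1 Ld (x1, x2) - fm (x1, x2)) by abel, h2, sub_self]

/-- **Existence of the local flow of a regular forced discrete mechanical system.** -/
theorem exists_local_flow_of_regular
    (Ld : E × E → ℝ) (fm fp : E × E → (E →L[ℝ] ℝ))
    (hLd : ContDiff ℝ (⊤ : ℕ∞) Ld) (hfm : ContDiff ℝ (⊤ : ℕ∞) fm) (hfp : ContDiff ℝ (⊤ : ℕ∞) fp)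
    (hregp : IsLocalDiffeo (FLp Ld fp)) (hregm : IsLocalDiffeo (FLm Ld fm))
    (q0 q1 q2 : E) (htraj : FLp Ld fp (q0, q1) = FLm Ld fm (q1, q2)) :
    ∃ (U V : Set (E × E)) (F G : (E × E) → (E × E)),
      IsOpen U ∧ IsOpen V ∧
      (∀ x ∈ U, F x ∈ V) ∧ (∀ y ∈ V, G y ∈ U) ∧
      (∀ x ∈ U, G (F x) = x) ∧ (∀ y ∈ V, F (G y) = y) ∧
      DifferentiableOn ℝ F U ∧ DifferentiableOn ℝ G V ∧
      -- (1) the flow maps (q0,q1) to (q1,q2)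
      (q0, q1) ∈ U ∧ (q1, q2) ∈ V ∧ F (q0, q1) = (q1, q2) ∧
      -- (2) F intertwines the forced discrete Legendre transforms, hence produces trajectories
      (∀ x ∈ U, FLm Ld fm (F x) = FLp Ld fp x) ∧
      (∀ x0 x1 : E, (x0, x1) ∈ U → ForcedDEL Ld fm fp x0 x1 (F (x0, x1)).2) ∧
      -- (3) uniqueness of trajectories through U and V
      (∀ q0' q1' q2' : E, ForcedDEL Ld fm fp q0' q1' q2' →
        (q0', q1') ∈ U → (q1', q2') ∈ V → (q1', q2') = F (q0', q1')) := by
  obtain ⟨Up, gp, hqUp, hUpopen, hUpimg, hUpcont, hgpl, hgpr, hgpdiff⟩ := hregp (q0, q1)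
  obtain ⟨Um, gm, hqUm, hUmopen, hUmimg, hUmcont, hgml, hgmr, hgmdiff⟩ := hregm (q1, q2)
  set P := FLp Ld fp with hP
  set M := FLm Ld fm with hM
  set W : Set (E × (E →L[ℝ] ℝ)) := (P '' Up) ∩ (M '' Um) with hW
  have hWopen : IsOpen W := hUpimg.inter hUmimg
  set U : Set (E × E) := Up ∩ P ⁻¹' W with hU
  set V : Set (E × E) := Um ∩ M ⁻¹' W with hV
  have hUopen : IsOpen U := hUpcont.isOpen_inter_preimage hUpopen hWopen
  have hVopen : IsOpen V := hUmcont.isOpen_inter_preimage hUmopen hWopen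
  set F : E × E → E × E := fun x => gm (P x) with hF
  set G : E × E → E × E := fun y => gp (M y) with hG
  -- basic facts
  have hgmUm : ∀ y ∈ M '' Um, gm y ∈ Um := by
    rintro y ⟨z, hz, rfl⟩; rw [hgml z hz]; exact hz
  have hgpUp : ∀ y ∈ P '' Up, gp y ∈ Up := by
    rintro y ⟨z, hz, rfl⟩; rw [hgpl z hz]; exact hz
  have hFU : ∀ x ∈ U, F x ∈ V := by
    intro x hx
    have hw : P x ∈ W := hx.2
    have h1 : gm (P x) ∈ Um := hgmUm _ hw.2
    have h2 : M (gm (P x)) = P x := hgmr _ hw.2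
    exact ⟨h1, by rw [Set.mem_preimage]; show M (gm (P x)) ∈ W; rw [h2]; exact hw⟩
  have hGV : ∀ y ∈ V, G y ∈ U := by
    intro y hy
    have hw : M y ∈ W := hy.2
    have h1 : gp (M y) ∈ Up := hgpUp _ hw.1
    have h2 : P (gp (M y)) = M y := hgpr _ hw.1
    exact ⟨h1, by rw [Set.mem_preimage]; show P (gp (M y)) ∈ W; rw [h2]; exact hw⟩
  have hMF : ∀ x ∈ U, M (F x) = P x := fun x hx => hgmr _ hx.2.2
  have hPG : ∀ y ∈ V, P (G y) = M y := fun y hy => hgpr _ hy.2.1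
  have hGF : ∀ x ∈ U, G (F x) = x := by
    intro x hx
    show gp (M (gm (P x))) = x
    rw [hgmr _ hx.2.2]
    exact hgpl x hx.1
  have hFG : ∀ y ∈ V, F (G y) = y := by
    intro y hy
    show gm (P (gp (M y))) = y
    rw [hgpr _ hy.2.1]
    exact hgml y hy.1
  have hPdiff := diff_FLp Ld fp hLd hfp
  have hMdiff := diff_FLm Ld fm hLd hfm
  have hFdiff : DifferentiableOn ℝ F U := by
    refine hgmdiff.comp (hPdiff.differentiableOn) ?_
    intro x hx; exact hx.2.2
  have hGdiff : DifferentiableOn ℝ G V := by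
    refine hgpdiff.comp (hMdiff.differentiableOn) ?_
    intro y hy; exact hy.2.1
  have hq01W : P (q0, q1) ∈ W := by
    constructor
    · exact ⟨(q0, q1), hqUp, rfl⟩
    · rw [htraj]; exact ⟨(q1, q2), hqUm, rfl⟩
  have hq01U : (q0, q1) ∈ U := ⟨hqUp, hq01W⟩
  have hq12V : (q1, q2) ∈ V := ⟨hqUm, by rw [Set.mem_preimage, ← htraj]; exact hq01W⟩
  have hFq : F (q0, q1) = (q1, q2) := by
    show gm (P (q0, q1)) = (q1, q2)
    rw [htraj]; exact hgml _ hqUm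
  refine ⟨U, V, F, G, hUopen, hVopen, hFU, hGV, hGF, hFG, hFdiff, hGdiff,
    hq01U, hq12V, hFq, hMF, ?_, ?_⟩
  · -- (2) ForcedDEL
    intro x0 x1 hx
    have h := hMF _ hx
    have h1 : (F (x0, x1)).1 = x1 := congrArg Prod.fst h
    have hFx : F (x0, x1) = (x1, (F (x0, x1)).2) := Prod.ext h1 rfl
    rw [FDEL_iff]
    have h2 : M (x1, (F (x0, x1)).2) = P (x0, x1) := by
      conv_lhs => rw [← hFx]
      exact h
    exact h2.symm
  · -- (3) uniqueness
    intro q0' q1' q2' hdel hU' hV'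
    rw [FDEL_iff] at hdel
    have : F (q0', q1') = gm (M (q1', q2')) := congrArg gm hdel
    rw [this, hgml _ hV'.1]
end

section
/- Let L_d : E × E → ℝ be differentiable and let A : E →L[ℝ] E be a continuous linear operator such that L_d is invariant under the one-parameter group generated by A: L_d(exp(tA) q0, exp(tA) q1) = L_d(q0,q1) for all t ∈ ℝ and all q0, q1 ∈ E, where exp(tA) is the exponential of the operator tA. Then for all q0, q1 ∈ E, D₁L_d(q0,q1)(A q0) + D₂L_d(q0,q1)(A q1) = 0; equivalently, the two expressions D₂L_d(q0,q1)(A q1) and −D₁L_d(q0,q1)(A q0) defining the discrete momentum map agree. -/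
open ContinuousLinearMap

variable {E : Type*} [NormedAddCommGroup E] [NormedSpace ℝ E] [FiniteDimensional ℝ E]

/-! Differentiating the invariance `L (exp (t • A) q0, exp (t • A) q1) = L (q0, q1)` at `t = 0`
gives `fderiv L (q0, q1) (A q0, A q1) = 0`, and the total derivative applied to `(v, w)` splits
as `D₁L v + D₂L w`. -/

theorem HasFDerivAt.apply_eq_zero_of_comp_eq_const {𝕜 F G : Type*} [NontriviallyNormedField 𝕜]
    [NormedAddCommGroup F] [NormedSpace 𝕜 F] [NormedAddCommGroup G] [NormedSpace 𝕜 G]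
    {f : F → G} {f' : F →L[𝕜] G} {γ : 𝕜 → F} {v : F} {t₀ : 𝕜}
    (hf : HasFDerivAt f f' (γ t₀)) (hγ : HasDerivAt γ v t₀) (hconst : ∀ t, f (γ t) = f (γ t₀)) :
    f' v = 0 :=
  (hf.comp_hasDerivAt t₀ hγ).unique <| by
    simpa only [Function.comp_def, hconst] using hasDerivAt_const t₀ (f (γ t₀))

theorem hasDerivAt_exp_smul_apply {𝕂 V : Type*} [RCLike 𝕂] [NormedAddCommGroup V]
    [NormedSpace 𝕂 V] [CompleteSpace V] (A : V →L[𝕂] V) (q : V) (t : 𝕂) :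
    HasDerivAt (fun u : 𝕂 => NormedSpace.exp (u • A) q) (NormedSpace.exp (t • A) (A q)) t :=
  (apply 𝕂 V q).hasFDerivAt.comp_hasDerivAt t (hasDerivAt_exp_smul_const A t)

theorem D1_add_D2_eq_fderiv {V : Type*} [NormedAddCommGroup V] [NormedSpace ℝ V]
    {L : V × V → ℝ} {x : V × V} (hL : DifferentiableAt ℝ L x) (v w : V) :
    D1 L x v + D2 L x w = fderiv ℝ L x (v, w) := by
  have h1 : D1 L x = (fderiv ℝ L x).comp (inl ℝ V V) :=
    (hL.hasFDerivAt.comp x.1 (hasFDerivAt_prodMk_left x.1 x.2)).fderiv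
  have h2 : D2 L x = (fderiv ℝ L x).comp (inr ℝ V V) :=
    (hL.hasFDerivAt.comp x.2 (hasFDerivAt_prodMk_right x.1 x.2)).fderiv
  rw [h1, h2, comp_apply, comp_apply, ← map_add, inl_apply, inr_apply, Prod.mk_add_mk,
    add_zero, zero_add]

/-- **Infinitesimal invariance and equality of the two expressions for the discrete
momentum map.** If `L_d` is invariant under the one-parameter group `exp(tA)`, then
`D₁L_d(q0,q1)(A q0) + D₂L_d(q0,q1)(A q1) = 0`. -/
theorem discrete_momentum_well_defined
    (Ld : E × E → ℝ) (hLd : Differentiable ℝ Ld) (A : E →L[ℝ] E)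
    (hinv : ∀ (t : ℝ) (q0 q1 : E),
      Ld (NormedSpace.exp (t • A) q0, NormedSpace.exp (t • A) q1) = Ld (q0, q1)) :
    ∀ q0 q1 : E, D1 Ld (q0, q1) (A q0) + D2 Ld (q0, q1) (A q1) = 0 := by
  intro q0 q1
  let orbit : ℝ → E × E := fun t => (NormedSpace.exp (t • A) q0, NormedSpace.exp (t • A) q1)
  have horbit_zero : orbit 0 = (q0, q1) := by simp [orbit]
  have horbit : HasDerivAt orbit (A q0, A q1) 0 := by
    simpa using (hasDerivAt_exp_smul_apply A q0 0).prodMk (hasDerivAt_exp_smul_apply A q1 0)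
  rw [D1_add_D2_eq_fderiv (hLd _)]
  refine HasFDerivAt.apply_eq_zero_of_comp_eq_const (f := Ld) (γ := orbit) ?_ horbit fun t => ?_
  · exact horbit_zero ▸ (hLd _).hasFDerivAt
  · rw [horbit_zero]
    exact hinv t q0 q1
end

section
/- (Discrete Noether theorem / conservation of the discrete momentum map.) Let L_d : E × E → ℝ be differentiable and let A : E →L[ℝ] E satisfy L_d(exp(tA) q0, exp(tA) q1) = L_d(q0,q1) for all t ∈ ℝ and all q0, q1 ∈ E. If (q0,q1,q2) satisfies the discrete Euler–Lagrange equation D₂L_d(q0,q1) + D₁L_d(q1,q2) = 0 (as an element of E →L[ℝ] ℝ), then the discrete momentum is conserved: D₂L_d(q0,q1)(A q1) = D₂L_d(q1,q2)(A q2). -/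
open ContinuousLinearMap

variable {E : Type*} [NormedAddCommGroup E] [NormedSpace ℝ E] [FiniteDimensional ℝ E]

/-! Differentiating the invariance `L_d (exp(tA) a, exp(tA) b) = L_d (a, b)` at `t = 0` gives
`D₁L_d(a,b)(A a) + D₂L_d(a,b)(A b) = 0`. At `(q1, q2)` the Euler–Lagrange equation replaces
`D₁L_d(q1,q2)` by `-D₂L_d(q0,q1)`, which is the conservation law. -/

theorem hasDerivAt_exp_smul_apply_zero {𝕂 F : Type*} [RCLike 𝕂] [NormedAddCommGroup F]
    [NormedSpace 𝕂 F] [CompleteSpace F] (A : F →L[𝕂] F) (x : F) :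
    HasDerivAt (fun t : 𝕂 => NormedSpace.exp (t • A) x) (A x) 0 := by
  simpa [Function.comp_def] using
    (apply 𝕂 F x).hasFDerivAt.comp_hasDerivAt 0 (hasDerivAt_exp_smul_const A (0 : 𝕂))

theorem fderiv_apply_eq_D1_add_D2 {F : Type*} [NormedAddCommGroup F] [NormedSpace ℝ F]
    {L : F × F → ℝ} {a b : F} (hL : DifferentiableAt ℝ L (a, b)) (v : F × F) :
    fderiv ℝ L (a, b) v = D1 L (a, b) v.1 + D2 L (a, b) v.2 := by
  have hD1 : D1 L (a, b) = (fderiv ℝ L (a, b)).comp (inl ℝ F F) :=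
    (hL.hasFDerivAt.comp a (hasFDerivAt_prodMk_left a b)).fderiv
  have hD2 : D2 L (a, b) = (fderiv ℝ L (a, b)).comp (inr ℝ F F) :=
    (hL.hasFDerivAt.comp b (hasFDerivAt_prodMk_right a b)).fderiv
  rw [hD1, hD2, comp_inl_add_comp_inr]

theorem D1_add_D2_eq_zero_of_exp_smul_invariant {F : Type*} [NormedAddCommGroup F]
    [NormedSpace ℝ F] [CompleteSpace F] {L : F × F → ℝ} {a b : F}
    (hL : DifferentiableAt ℝ L (a, b)) (A : F →L[ℝ] F)
    (hinv : ∀ t : ℝ, L (NormedSpace.exp (t • A) a, NormedSpace.exp (t • A) b) = L (a, b)) :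
    D1 L (a, b) (A a) + D2 L (a, b) (A b) = 0 := by
  have horbit : HasDerivAt (fun t : ℝ => L (NormedSpace.exp (t • A) a, NormedSpace.exp (t • A) b))
      (fderiv ℝ L (a, b) (A a, A b)) 0 :=
    hL.hasFDerivAt.comp_hasDerivAt_of_eq 0
      ((hasDerivAt_exp_smul_apply_zero A a).prodMk (hasDerivAt_exp_smul_apply_zero A b))
      (by simp)
  have hconst : HasDerivAt (fun t : ℝ => L (NormedSpace.exp (t • A) a, NormedSpace.exp (t • A) b))
      0 0 := by
    simpa only [hinv] using hasDerivAt_const (0 : ℝ) (L (a, b))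
  rw [← fderiv_apply_eq_D1_add_D2 hL (A a, A b)]
  exact horbit.unique hconst

/-- **Discrete Noether theorem: conservation of the discrete momentum map.**
If `L_d` is invariant under the one-parameter group `exp(tA)` and `(q0,q1,q2)` satisfies
the discrete Euler–Lagrange equation, then the discrete momentum is conserved. -/
theorem discrete_noether
    (Ld : E × E → ℝ) (hLd : Differentiable ℝ Ld) (A : E →L[ℝ] E)
    (hinv : ∀ (t : ℝ) (q0 q1 : E),
      Ld (NormedSpace.exp (t • A) q0, NormedSpace.exp (t • A) q1) = Ld (q0, q1))
    (q0 q1 q2 : E)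
    (hDEL : D2 Ld (q0, q1) + D1 Ld (q1, q2) = 0) :
    D2 Ld (q0, q1) (A q1) = D2 Ld (q1, q2) (A q2) := by
  have hsymm := D1_add_D2_eq_zero_of_exp_smul_invariant (hLd (q1, q2)) A (fun t => hinv t q1 q2)
  have hEL : D2 Ld (q0, q1) (A q1) + D1 Ld (q1, q2) (A q1) = 0 := by
    simpa using DFunLike.congr_fun hDEL (A q1)
  linarith
end

section
/- (Equivariance of the discrete momentum map.) Let L_d : E × E → ℝ be differentiable and let g : E ≃L[ℝ] E be a continuous linear equivalence such that L_d(g q0, g q1) = L_d(q0,q1) for all q0, q1 ∈ E. Then for every continuous linear operator ξ : E →L[ℝ] E and all q0, q1 ∈ E, D₂L_d(g q0, g q1)(ξ(g q1)) = D₂L_d(q0,q1)((g⁻¹ ∘ ξ ∘ g)(q1)); that is, J_d(g q0, g q1)(ξ) = J_d(q0,q1)(Ad_{g⁻¹} ξ), where J_d(q0,q1)(ξ) := D₂L_d(q0,q1)(ξ q1) and Ad_{g⁻¹} ξ := g⁻¹ ∘ ξ ∘ g. -/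
open ContinuousLinearMap

variable {E : Type*} [NormedAddCommGroup E] [NormedSpace ℝ E] [FiniteDimensional ℝ E]

/-- **Equivariance of the discrete momentum map.** If `L_d` is invariant under the
linear symmetry `g`, then `J_d(g q0, g q1)(ξ) = J_d(q0, q1)(Ad_{g⁻¹} ξ)`, where
`J_d(q0,q1)(ξ) := D₂L_d(q0,q1)(ξ q1)` and `Ad_{g⁻¹} ξ := g⁻¹ ∘ ξ ∘ g`. -/
theorem discrete_momentum_equivariance
    (Ld : E × E → ℝ) (hLd : Differentiable ℝ Ld) (g : E ≃L[ℝ] E)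
    (hinv : ∀ q0 q1 : E, Ld (g q0, g q1) = Ld (q0, q1)) :
    ∀ (ξ : E →L[ℝ] E) (q0 q1 : E),
      D2 Ld (g q0, g q1) (ξ (g q1)) = D2 Ld (q0, q1) (g.symm (ξ (g q1))) := by
  intro ξ q0 q1
  have h : (fun b => Ld (q0, b)) = (fun b => Ld (g q0, b)) ∘ ⇑g :=
    funext fun b => (hinv q0 b).symm
  show fderiv ℝ (fun b => Ld (g q0, b)) (g q1) (ξ (g q1)) =
      fderiv ℝ (fun b => Ld (q0, b)) q1 (g.symm (ξ (g q1)))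
  rw [h, g.comp_right_fderiv]
  simp
end

section
/- (Isotropy subgroup of a coadjoint orbit of SE(2).) For α, a, b ∈ ℝ let g be the 3×3 real matrix with rows (cos α, −sin α, a), (sin α, cos α, b), (0,0,1), and for ξ1, ξ2, ξ3 ∈ ℝ let ξ(ξ1,ξ2,ξ3) be the matrix with rows (0, −ξ1, ξ2), (ξ1, 0, ξ3), (0,0,0). Let μ1, μ2, μ3 ∈ ℝ with (μ2, μ3) ≠ (0,0), and define the pairing ⟨μ, ξ(ξ1,ξ2,ξ3)⟩ := μ1 ξ1 + μ2 ξ2 + μ3 ξ3. Then ⟨μ, g * ξ(ξ1,ξ2,ξ3) * g⁻¹⟩ = ⟨μ, ξ(ξ1,ξ2,ξ3)⟩ holds for all ξ1, ξ2, ξ3 ∈ ℝ if and only if cos α = 1, sin α = 0 and μ2 b = μ3 a. -/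
open Real Matrix

/-- An element of `SE(2)` realized as a `3 × 3` matrix. -/
noncomputable def SE2mat (α a b : ℝ) : Matrix (Fin 3) (Fin 3) ℝ :=
  !![Real.cos α, -Real.sin α, a;
     Real.sin α,  Real.cos α, b;
     0, 0, 1]

/-- An element of the Lie algebra `se(2)` realized as a `3 × 3` matrix. -/
def se2mat (ξ1 ξ2 ξ3 : ℝ) : Matrix (Fin 3) (Fin 3) ℝ :=
  !![0, -ξ1, ξ2;
     ξ1, 0, ξ3;
     0, 0, 0]

/-- The pairing of a dual element `μ = (μ1, μ2, μ3)` with a Lie algebra matrix,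
extracting the coordinates `ξ1 = M 1 0`, `ξ2 = M 0 2`, `ξ3 = M 1 2`. -/
def se2Pairing (μ1 μ2 μ3 : ℝ) (M : Matrix (Fin 3) (Fin 3) ℝ) : ℝ :=
  μ1 * M 1 0 + μ2 * M 0 2 + μ3 * M 1 2

lemma SE2mat_inv (α a b : ℝ) :
    (SE2mat α a b)⁻¹ =
      !![Real.cos α, Real.sin α, -(Real.cos α * a + Real.sin α * b);
         -Real.sin α, Real.cos α, Real.sin α * a - Real.cos α * b;
         0, 0, 1] := by
  apply inv_eq_right_inv
  have h := Real.sin_sq_add_cos_sq α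
  ext i j
  fin_cases i <;> fin_cases j <;>
    simp [SE2mat, Matrix.mul_apply, Fin.sum_univ_succ] <;> first | ring1 | linear_combination h | linear_combination (-a) * h | linear_combination (-b) * h

lemma pairing_eq (α a b μ1 μ2 μ3 ξ1 ξ2 ξ3 : ℝ) :
    se2Pairing μ1 μ2 μ3 (SE2mat α a b * se2mat ξ1 ξ2 ξ3 * (SE2mat α a b)⁻¹)
      = μ1 * ξ1 + μ2 * (b * ξ1 + Real.cos α * ξ2 - Real.sin α * ξ3)
        + μ3 * (-a * ξ1 + Real.sin α * ξ2 + Real.cos α * ξ3) := by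
  have h := Real.sin_sq_add_cos_sq α
  rw [SE2mat_inv]
  simp [se2Pairing, SE2mat, se2mat, Matrix.mul_apply, Fin.sum_univ_succ]
  linear_combination (μ1 * ξ1 + μ2 * b * ξ1 - μ3 * a * ξ1) * h

lemma pairing_se2 (μ1 μ2 μ3 ξ1 ξ2 ξ3 : ℝ) :
    se2Pairing μ1 μ2 μ3 (se2mat ξ1 ξ2 ξ3) = μ1 * ξ1 + μ2 * ξ2 + μ3 * ξ3 := by
  simp [se2Pairing, se2mat]

/-- **Isotropy subgroup of a coadjoint orbit of `SE(2)` with `(μ2, μ3) ≠ (0, 0)`.**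
`g = g(α,a,b)` fixes `μ` under the coadjoint action iff `cos α = 1`, `sin α = 0` and
`μ2 b = μ3 a`. -/
theorem SE2_coadjoint_isotropy (α a b μ1 μ2 μ3 : ℝ) (hμ : (μ2, μ3) ≠ (0, 0)) :
    (∀ ξ1 ξ2 ξ3 : ℝ,
        se2Pairing μ1 μ2 μ3 (SE2mat α a b * se2mat ξ1 ξ2 ξ3 * (SE2mat α a b)⁻¹)
          = se2Pairing μ1 μ2 μ3 (se2mat ξ1 ξ2 ξ3))
    ↔ (Real.cos α = 1 ∧ Real.sin α = 0 ∧ μ2 * b = μ3 * a) := by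
  constructor
  · intro h
    have h1 := h 1 0 0
    have h2 := h 0 1 0
    have h3 := h 0 0 1
    rw [pairing_eq, pairing_se2] at h1 h2 h3
    have hpos : 0 < μ2 ^ 2 + μ3 ^ 2 := by
      have : μ2 ≠ 0 ∨ μ3 ≠ 0 := by
        by_contra hcon
        push_neg at hcon
        exact hμ (by simp [hcon.1, hcon.2])
      rcases this with h | h
      · positivity
      · positivity
    have key : (μ2 ^ 2 + μ3 ^ 2) * (Real.cos α - 1) = 0 := by
      linear_combination μ2 * h2 + μ3 * h3
    have hc : Real.cos α = 1 := by
      rcases mul_eq_zero.mp key with h' | h'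
      · exact absurd h' hpos.ne'
      · linarith
    have hs : Real.sin α = 0 := by
      have := Real.sin_sq_add_cos_sq α
      nlinarith [this]
    exact ⟨hc, hs, by nlinarith [h1]⟩
  · rintro ⟨hc, hs, hab⟩ ξ1 ξ2 ξ3
    rw [pairing_eq, pairing_se2, hc, hs]
    linear_combination ξ1 * hab
end
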